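/- arXiv:1708.07849 — 2 statements merged into one kernel-verified Lean document; each statement's English description precedes it below -/
import Mathlib

section
/- Let μ be a Borel probability measure with compact support contained in M^{2×2}_+. Then the support of the dual measure μ̃ equals Ψ(supp μ), and the double dual of μ equals μ: (μ̃)˜ = μ. -/
open MeasureTheory

noncomputable section

instance matrixMeasurableSpace {m n : ℕ} : MeasurableSpace (Matrix (Fin m) (Fin n) ℝ) :=
  show MeasurableSpace (Fin m → Fin n → ℝ) from inferInstance

/-- The Jacobian matrix of `φ : ℝⁿ → ℝᵐ` at `x`. -/
def jacobianM (m n : ℕ) (φ : (Fin n → ℝ) → (Fin m → ℝ)) (x : Fin n → ℝ) :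
    Matrix (Fin m) (Fin n) ℝ :=
  Matrix.of fun i j => fderiv ℝ φ x (Pi.single j 1) i

/-- `f : ℝ^{m×n} → ℝ` is quasiconvex: `f` is Borel measurable, locally bounded, and for every
nonempty bounded open `Ω ⊆ ℝⁿ`, every `X₀` and every smooth `φ` compactly supported in `Ω`,
`f X₀ * |Ω| ≤ ∫_Ω f (X₀ + Dφ x) dx`. -/
def IsQuasiconvex {m n : ℕ} (f : Matrix (Fin m) (Fin n) ℝ → ℝ) : Prop :=
  Measurable f ∧
  (∀ K : Set (Matrix (Fin m) (Fin n) ℝ), IsCompact K → ∃ C : ℝ, ∀ X ∈ K, |f X| ≤ C) ∧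
  ∀ Ω : Set (Fin n → ℝ), IsOpen Ω → Ω.Nonempty → Bornology.IsBounded Ω →
    ∀ (X₀ : Matrix (Fin m) (Fin n) ℝ) (φ : (Fin n → ℝ) → (Fin m → ℝ)),
      ContDiff ℝ (⊤ : ℕ∞) φ → HasCompactSupport φ → tsupport φ ⊆ Ω →
      f X₀ * (volume Ω).toReal ≤ ∫ x in Ω, f (X₀ + jacobianM m n φ x)

/-- `f : ℝ^{m×n} → ℝ` is rank-one convex. -/
def IsRankOneConvex {m n : ℕ} (f : Matrix (Fin m) (Fin n) ℝ → ℝ) : Prop :=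
  ∀ X Y : Matrix (Fin m) (Fin n) ℝ, (X - Y).rank ≤ 1 →
    ∀ t : ℝ, t ∈ Set.Icc (0 : ℝ) 1 →
      f (t • X + (1 - t) • Y) ≤ t * f X + (1 - t) * f Y

/-- The barycentre `μ̄ = ∫ X dμ(X)`, computed entrywise. -/
def matBarycenter {m n : ℕ} (μ : Measure (Matrix (Fin m) (Fin n) ℝ)) :
    Matrix (Fin m) (Fin n) ℝ :=
  Matrix.of fun i j => ∫ X, X i j ∂μ

/-- `M^{2×n}_tri`: second row is `(0, …, 0, a)`. -/
def Mtri (n : ℕ) : Set (Matrix (Fin 2) (Fin n) ℝ) :=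
  {X | ∀ j : Fin n, (j : ℕ) + 1 < n → X 1 j = 0}

/-- `M^{2×n}_diag`: first row `(a₁, …, a_{n-1}, 0)`, second row `(0, …, 0, b)`. -/
def Mdiag (n : ℕ) : Set (Matrix (Fin 2) (Fin n) ℝ) :=
  {X | (∀ j : Fin n, (j : ℕ) + 1 < n → X 1 j = 0) ∧
       (∀ j : Fin n, (j : ℕ) + 1 = n → X 0 j = 0)}

/-- The orthogonal projection of `ℝ^{2×n}` onto `M^{2×n}_diag`. -/
def Pdiag (n : ℕ) (X : Matrix (Fin 2) (Fin n) ℝ) : Matrix (Fin 2) (Fin n) ℝ :=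
  Matrix.of fun i j =>
    if i = 0 then (if (j : ℕ) + 1 < n then X 0 j else 0)
    else (if (j : ℕ) + 1 = n then X 1 j else 0)

/-- A homogeneous gradient Young measure: a compactly supported Borel probability measure
satisfying Jensen's inequality for all quasiconvex functions. -/
def IsHomogeneousGradientYoungMeasure {m n : ℕ}
    (μ : Measure (Matrix (Fin m) (Fin n) ℝ)) : Prop :=
  IsProbabilityMeasure μ ∧ (∃ K, IsCompact K ∧ μ Kᶜ = 0) ∧
  ∀ f : Matrix (Fin m) (Fin n) ℝ → ℝ, IsQuasiconvex f →
    f (matBarycenter μ) ≤ ∫ X, f X ∂μ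

/-- A laminate: a compactly supported Borel probability measure
satisfying Jensen's inequality for all rank-one convex functions. -/
def IsLaminate {m n : ℕ} (μ : Measure (Matrix (Fin m) (Fin n) ℝ)) : Prop :=
  IsProbabilityMeasure μ ∧ (∃ K, IsCompact K ∧ μ Kᶜ = 0) ∧
  ∀ f : Matrix (Fin m) (Fin n) ℝ → ℝ, IsRankOneConvex f →
    f (matBarycenter μ) ≤ ∫ X, f X ∂μ

/-- `M^{2×2}_+ = {X : X₁₂ > 0}`. -/
def Mplus : Set (Matrix (Fin 2) (Fin 2) ℝ) := {X | 0 < X 0 1}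

/-- The partial Legendre transform `Ψ`. -/
def Psi (X : Matrix (Fin 2) (Fin 2) ℝ) : Matrix (Fin 2) (Fin 2) ℝ :=
  (X 0 1)⁻¹ • !![-(X 0 0), 1; -X.det, X 1 1]

/-- The dual function `h̃(X) = X₁₂ · h(Ψ(X))`. -/
def dualFn (h : Matrix (Fin 2) (Fin 2) ℝ → ℝ) (X : Matrix (Fin 2) (Fin 2) ℝ) : ℝ :=
  X 0 1 * h (Psi X)

/-- The dual measure `μ̃`, characterised by
`∫ f dμ̃ = (1/μ̄₁₂) ∫ X₁₂ · f(Ψ(X)) dμ(X)` for all Borel `f : M → [0,∞]`. -/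
def dualMeasure (μ : Measure (Matrix (Fin 2) (Fin 2) ℝ)) :
    Measure (Matrix (Fin 2) (Fin 2) ℝ) :=
  Measure.map Psi
    ((ENNReal.ofReal (matBarycenter μ 0 1))⁻¹ •
      μ.withDensity fun X => ENNReal.ofReal (X 0 1))

/-- The (topological) support of a measure. -/
def mSupport {α : Type*} [TopologicalSpace α] [MeasurableSpace α] (μ : Measure α) : Set α :=
  {x | ∀ U : Set α, IsOpen U → x ∈ U → μ U ≠ 0}

/-- `f` is quasiconvex on the open set `U ⊆ ℝ^{2×2}`. -/
def IsQuasiconvexOn (U : Set (Matrix (Fin 2) (Fin 2) ℝ))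
    (f : Matrix (Fin 2) (Fin 2) ℝ → ℝ) : Prop :=
  ∀ Ω : Set (Fin 2 → ℝ), IsOpen Ω → Ω.Nonempty → Bornology.IsBounded Ω →
    ∀ (A : Matrix (Fin 2) (Fin 2) ℝ) (φ : (Fin 2 → ℝ) → (Fin 2 → ℝ)),
      ContDiff ℝ (⊤ : ℕ∞) φ → HasCompactSupport φ → tsupport φ ⊆ Ω →
      (∀ x, A + jacobianM 2 2 φ x ∈ U) →
      f A * (volume Ω).toReal ≤ ∫ x in Ω, f (A + jacobianM 2 2 φ x)

/-- `f` is rank-one convex on the open convex set `U ⊆ ℝ^{2×2}`. -/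
def IsRankOneConvexOn (U : Set (Matrix (Fin 2) (Fin 2) ℝ))
    (f : Matrix (Fin 2) (Fin 2) ℝ → ℝ) : Prop :=
  ∀ X ∈ U, ∀ Y ∈ U, (X - Y).rank ≤ 1 →
    ∀ t : ℝ, t ∈ Set.Icc (0 : ℝ) 1 →
      f (t • X + (1 - t) • Y) ≤ t * f X + (1 - t) * f Y

/-! On `M^{2×2}_+`, `Ψ` is a continuous involution, and it inverts the weight of the dual
measure: `(Ψ X)₁₂ = 1 / X₁₂`. So `X₁₂ μ / μ̄₁₂` has the same null sets as `μ`, and since `supp μ`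
is a compact subset of `M^{2×2}_+`, where `Ψ` is continuous, pushing forward by `Ψ` maps the
support onto `Ψ(supp μ)`. Reweighting `μ̃` by `Y₁₂` cancels the first weight; this gives
`(μ̃)‾₁₂ = 1 / μ̄₁₂`, and then `(μ̃)˜ = (Ψ ∘ Ψ)_* μ = μ`. -/

open Set
open scoped ENNReal

instance matrixBorelSpace : BorelSpace (Matrix (Fin 2) (Fin 2) ℝ) :=
  show BorelSpace (Fin 2 → Fin 2 → ℝ) from Pi.borelSpace

namespace MeasureTheory.Measure

variable {α β : Type*} [MeasurableSpace α] [MeasurableSpace β]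

theorem withDensity_map {μ : Measure α} {f : α → β} (hf : Measurable f) {g : β → ℝ≥0∞}
    (hg : Measurable g) :
    (μ.map f).withDensity g = (μ.withDensity (g ∘ f)).map f := by
  ext s hs
  rw [withDensity_apply _ hs, map_apply hf hs, withDensity_apply _ (hf hs),
    setLIntegral_map hs hg hf, Function.comp_def]

variable [TopologicalSpace α]

theorem mem_support_map_of_continuousAt [TopologicalSpace β]
    {μ : Measure α} {f : α → β} (hf : Measurable f) {x : α} (hx : x ∈ μ.support)
    (hfx : ContinuousAt f x) : f x ∈ (μ.map f).support := by
  rw [mem_support_iff_forall] at hx ⊢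
  exact fun V hV => (hx _ (hfx hV)).trans_le (le_map_apply hf.aemeasurable V)

theorem support_map_eq_image_of_invOn [OpensMeasurableSpace α] [T2Space α]
    {μ : Measure α} {f : α → α} {U K : Set α} (hfm : Measurable f) (hU : IsOpen U)
    (hf : ContinuousOn f U) (hfU : MapsTo f U U) (hff : ∀ x ∈ U, f (f x) = x)
    (hK : IsCompact K) (hKU : K ⊆ U) (hμK : ∀ᵐ x ∂μ, x ∈ K) :
    (μ.map f).support = f '' μ.support := by
  have hcont : ∀ x ∈ U, ContinuousAt f x := fun x hx => hf.continuousAt (hU.mem_nhds hx)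
  have hfK : IsCompact (f '' K) := hK.image_of_continuousOn (hf.mono hKU)
  have hμ_supp : μ.support ⊆ K := support_subset_of_isClosed hK.isClosed hμK
  have hfμ_supp : (μ.map f).support ⊆ f '' K :=
    support_subset_of_isClosed hfK.isClosed <|
      (ae_map_iff hfm.aemeasurable hfK.isClosed.measurableSet).2 <|
        hμK.mono fun x hx => mem_image_of_mem f hx
  have hffμ : (μ.map f).map f = μ := by
    have hid : f ∘ f =ᵐ[μ] id := hμK.mono fun x hx => hff x (hKU hx)
    rw [map_map hfm hfm, map_congr hid, map_id]
  refine Subset.antisymm (fun y hy => ?_) ?_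
  · have hyU : y ∈ U := hfU.image_subset (image_mono hKU (hfμ_supp hy))
    refine ⟨f y, ?_, hff y hyU⟩
    simpa only [hffμ] using mem_support_map_of_continuousAt hfm hy (hcont y hyU)
  · rintro _ ⟨x, hx, rfl⟩
    exact mem_support_map_of_continuousAt hfm hx (hcont x (hKU (hμ_supp hx)))

theorem _root_.MeasureTheory.integrable_of_ae_mem_isCompact [OpensMeasurableSpace α] [T2Space α]
    {μ : Measure α} [IsFiniteMeasureOnCompacts μ] {f : α → ℝ} {K : Set α}
    (hf : ContinuousOn f K) (hK : IsCompact K) (hμK : ∀ᵐ x ∂μ, x ∈ K) :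
    Integrable f μ := by
  rw [← Measure.restrict_eq_self_of_ae_mem hμK]
  exact hf.integrableOn_compact hK

end MeasureTheory.Measure

theorem mSupport_eq_support {α : Type*} [TopologicalSpace α] [MeasurableSpace α]
    (μ : Measure α) : mSupport μ = μ.support := by
  simp only [mSupport, Measure.support_eq_forall_isOpen, pos_iff_ne_zero]
  exact Set.ext fun x => ⟨fun h U hxU hU => h U hU hxU, fun h U hU hxU => h U hxU hU⟩

theorem continuous_entry (i j : Fin 2) : Continuous fun X : Matrix (Fin 2) (Fin 2) ℝ => X i j :=
  continuous_id.matrix_elem i j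

theorem isOpen_Mplus : IsOpen Mplus := isOpen_lt continuous_const (continuous_entry 0 1)

theorem Psi_apply_zero_one (X : Matrix (Fin 2) (Fin 2) ℝ) : Psi X 0 1 = (X 0 1)⁻¹ := by
  simp [Psi]

theorem mapsTo_Psi_Mplus : MapsTo Psi Mplus Mplus := fun X (hX : 0 < X 0 1) => by
  simpa [Mplus, Psi_apply_zero_one] using hX

theorem Psi_Psi {X : Matrix (Fin 2) (Fin 2) ℝ} (hX : X ∈ Mplus) : Psi (Psi X) = X := by
  have h : X 0 1 ≠ 0 := ne_of_gt hX
  ext i j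
  fin_cases i <;> fin_cases j <;> simp [Psi, Matrix.det_fin_two] <;> grind

theorem continuous_Psi_numerator :
    Continuous fun X : Matrix (Fin 2) (Fin 2) ℝ => !![-(X 0 0), 1; -X.det, X 1 1] := by
  fun_prop

theorem measurable_Psi : Measurable Psi :=
  (continuous_entry 0 1).measurable.inv.smul continuous_Psi_numerator.measurable

theorem continuousOn_Psi : ContinuousOn Psi Mplus :=
  ((continuous_entry 0 1).continuousOn.inv₀ fun _ hX => ne_of_gt hX).smul
    continuous_Psi_numerator.continuousOn

section DualMeasure

variable {μ : Measure (Matrix (Fin 2) (Fin 2) ℝ)}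

theorem matBarycenter_zero_one_pos [NeZero μ] (hμ : ∀ᵐ X ∂μ, X ∈ Mplus)
    (hint : Integrable (fun X => X 0 1) μ) : 0 < matBarycenter μ 0 1 := by
  refine (integral_pos_iff_support_of_nonneg_ae (hμ.mono fun X hX => le_of_lt hX) hint).2 ?_
  calc (0 : ℝ≥0∞) < μ Mplus := by
        rw [measure_congr (ae_eq_univ.2 hμ : Mplus =ᵐ[μ] univ)]
        exact Measure.measure_univ_pos.2 (NeZero.ne μ)
    _ ≤ μ (Function.support fun X => X 0 1) := measure_mono fun X hX => ne_of_gt hX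

def weightedMeasure (μ : Measure (Matrix (Fin 2) (Fin 2) ℝ)) :
    Measure (Matrix (Fin 2) (Fin 2) ℝ) :=
  (ENNReal.ofReal (matBarycenter μ 0 1))⁻¹ • μ.withDensity fun X => ENNReal.ofReal (X 0 1)

theorem dualMeasure_eq_map : dualMeasure μ = (weightedMeasure μ).map Psi := rfl

theorem measurable_ofReal_entry (i j : Fin 2) :
    Measurable fun X : Matrix (Fin 2) (Fin 2) ℝ => ENNReal.ofReal (X i j) :=
  (continuous_entry i j).measurable.ennreal_ofReal

theorem weightedMeasure_absolutelyContinuous : weightedMeasure μ ≪ μ :=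
  (withDensity_absolutelyContinuous _ _).smul_left _

theorem absolutelyContinuous_weightedMeasure (hμ : ∀ᵐ X ∂μ, X ∈ Mplus) :
    μ ≪ weightedMeasure μ :=
  (withDensity_absolutelyContinuous' (measurable_ofReal_entry 0 1).aemeasurable
    (hμ.mono fun _ hX => (ENNReal.ofReal_pos.2 hX).ne')).smul_right
    (ENNReal.inv_ne_zero.2 ENNReal.ofReal_ne_top)

theorem dualMeasure_support {K : Set (Matrix (Fin 2) (Fin 2) ℝ)} (hK : IsCompact K)
    (hKM : K ⊆ Mplus) (hμK : ∀ᵐ X ∂μ, X ∈ K) :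
    (dualMeasure μ).support = Psi '' μ.support := by
  have hσμ := weightedMeasure_absolutelyContinuous (μ := μ)
  have hμσ := absolutelyContinuous_weightedMeasure (hμK.mono hKM)
  rw [dualMeasure_eq_map, Measure.support_map_eq_image_of_invOn measurable_Psi isOpen_Mplus
    continuousOn_Psi mapsTo_Psi_Mplus (fun X hX => Psi_Psi hX) hK hKM (hσμ.ae_le hμK),
    subset_antisymm hσμ.support_mono hμσ.support_mono]

theorem ae_mem_Mplus_dualMeasure (hμ : ∀ᵐ X ∂μ, X ∈ Mplus) :
    ∀ᵐ Y ∂dualMeasure μ, Y ∈ Mplus := by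
  rw [dualMeasure_eq_map]
  refine (ae_map_iff (p := (· ∈ Mplus)) measurable_Psi.aemeasurable
    isOpen_Mplus.measurableSet).2 ?_
  exact weightedMeasure_absolutelyContinuous.ae_le (hμ.mono fun _ hX => mapsTo_Psi_Mplus hX)

theorem withDensity_dualMeasure (hμ : ∀ᵐ X ∂μ, X ∈ Mplus) :
    (dualMeasure μ).withDensity (fun Y => ENNReal.ofReal (Y 0 1)) =
      (ENNReal.ofReal (matBarycenter μ 0 1))⁻¹ • μ.map Psi := by
  have hρ := measurable_ofReal_entry 0 1
  have hρρ : (fun X => ENNReal.ofReal (X 0 1)) * (fun X => ENNReal.ofReal (Psi X 0 1))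
      =ᵐ[μ] 1 := hμ.mono fun X (hX : 0 < X 0 1) => by
    simp only [Pi.mul_apply, Psi_apply_zero_one, Pi.one_apply]
    rw [← ENNReal.ofReal_mul hX.le, mul_inv_cancel₀ hX.ne', ENNReal.ofReal_one]
  rw [dualMeasure_eq_map, Measure.withDensity_map measurable_Psi hρ, weightedMeasure,
    withDensity_smul_measure, ← withDensity_mul μ hρ (hρ.comp measurable_Psi),
    Function.comp_def, withDensity_congr_ae hρρ, withDensity_one, Measure.map_smul]

theorem matBarycenter_dualMeasure [IsProbabilityMeasure μ] (hμ : ∀ᵐ X ∂μ, X ∈ Mplus) :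
    matBarycenter (dualMeasure μ) 0 1 = (matBarycenter μ 0 1)⁻¹ := by
  have hc : 0 ≤ matBarycenter μ 0 1 := integral_nonneg_of_ae (hμ.mono fun _ hX => le_of_lt hX)
  calc matBarycenter (dualMeasure μ) 0 1
      = ENNReal.toReal ((dualMeasure μ).withDensity (fun Y => ENNReal.ofReal (Y 0 1)) univ) := by
        rw [withDensity_apply _ MeasurableSet.univ, setLIntegral_univ]
        exact integral_eq_lintegral_of_nonneg_ae
          ((ae_mem_Mplus_dualMeasure hμ).mono fun _ hY => le_of_lt hY)
          (continuous_entry 0 1).aestronglyMeasurable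
    _ = (matBarycenter μ 0 1)⁻¹ := by
        rw [withDensity_dualMeasure hμ, Measure.smul_apply,
          Measure.map_apply measurable_Psi MeasurableSet.univ, preimage_univ, measure_univ,
          smul_eq_mul, mul_one, ENNReal.toReal_inv, ENNReal.toReal_ofReal hc]

theorem dualMeasure_dualMeasure [IsProbabilityMeasure μ] (hμ : ∀ᵐ X ∂μ, X ∈ Mplus)
    (hc : 0 < matBarycenter μ 0 1) : dualMeasure (dualMeasure μ) = μ := by
  have hid : Psi ∘ Psi =ᵐ[μ] id := hμ.mono fun _ hX => Psi_Psi hX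
  rw [dualMeasure_eq_map, weightedMeasure, withDensity_dualMeasure hμ,
    matBarycenter_dualMeasure hμ, ENNReal.ofReal_inv_of_pos hc, inv_inv, smul_smul,
    ENNReal.mul_inv_cancel (ENNReal.ofReal_pos.2 hc).ne' ENNReal.ofReal_ne_top, one_smul,
    Measure.map_map measurable_Psi measurable_Psi, Measure.map_congr hid, Measure.map_id]

end DualMeasure

/-- For a compactly supported probability measure on `M^{2×2}_+`, the support of the dual
measure is `Ψ(supp μ)` and the double dual of `μ` is `μ`. -/
theorem dualMeasure_support_and_involution
    (μ : Measure (Matrix (Fin 2) (Fin 2) ℝ))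
    (hprob : IsProbabilityMeasure μ)
    (hsupp : ∃ K : Set (Matrix (Fin 2) (Fin 2) ℝ), IsCompact K ∧ K ⊆ Mplus ∧ μ Kᶜ = 0) :
    mSupport (dualMeasure μ) = Psi '' mSupport μ ∧ dualMeasure (dualMeasure μ) = μ := by
  obtain ⟨K, hK, hKM, hμK⟩ := hsupp
  have hK_ae : ∀ᵐ X ∂μ, X ∈ K := mem_ae_iff.2 hμK
  have hM_ae : ∀ᵐ X ∂μ, X ∈ Mplus := hK_ae.mono hKM
  have hc : 0 < matBarycenter μ 0 1 := matBarycenter_zero_one_pos hM_ae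
    (integrable_of_ae_mem_isCompact (continuous_entry 0 1).continuousOn hK hK_ae)
  rw [mSupport_eq_support, mSupport_eq_support]
  exact ⟨dualMeasure_support hK hKM hK_ae, dualMeasure_dualMeasure hM_ae hc⟩

end
end

section
/- If h : M^{2×2}_+ → ℝ is quasiconvex on M^{2×2}_+, then its dual function h̃(X) = X₁₂ · h(Ψ(X)) is quasiconvex on M^{2×2}_+. -/
open MeasureTheory

noncomputable section

/-!
Write `u(x) = A x + φ(x)`. Since `∂₂u₁ = (A + Dφ)₁₂ > 0` everywhere and `u` is affine off a compact
set, the partial hodograph map `Φ(x) = (x₁, u₁(x))` is a smooth diffeomorphism of `ℝ²` with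
`det DΦ = (Du)₁₂`. For `v = (x₂, u₂) ∘ Φ⁻¹` the chain rule and the identity
`Ψ(X) · [e₁; X₁] = [e₂; X₂]` give `Dv(Φ x) = Ψ(Du(x))`, and `v(y) - Ψ(A) y` vanishes off
`Φ(supp φ)`, so it is an admissible test function on `Φ(Ω)`. The change of variables `y = Φ(x)`
turns `∫_{Φ(Ω)} h(Dv)` into `∫_Ω h̃(Du)`, and `|Φ(Ω)| = ∫_Ω (Du)₁₂ = A₁₂ |Ω|` because
`∫ ∂₂φ₁ = 0`; quasiconvexity of `h` at `Ψ(A)` on `Φ(Ω)` thus becomes that of `h̃` at `A` on `Ω`.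
-/

open Matrix

section Jacobian

variable {m n p : ℕ}

theorem jacobianM_eq_toMatrix' (φ : (Fin n → ℝ) → (Fin m → ℝ)) (x : Fin n → ℝ) :
    jacobianM m n φ x = LinearMap.toMatrix' (fderiv ℝ φ x : (Fin n → ℝ) →ₗ[ℝ] (Fin m → ℝ)) :=
  rfl

theorem jacobianM_comp {f : (Fin n → ℝ) → (Fin p → ℝ)} {g : (Fin m → ℝ) → (Fin n → ℝ)}
    {x : Fin m → ℝ} (hf : DifferentiableAt ℝ f (g x)) (hg : DifferentiableAt ℝ g x) :
    jacobianM p m (f ∘ g) x = jacobianM p n f (g x) * jacobianM n m g x := by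
  rw [jacobianM_eq_toMatrix', fderiv_comp x hf hg]
  exact LinearMap.toMatrix'_comp _ _

theorem contDiff_mulVec_add {r : WithTop ℕ∞} (A : Matrix (Fin m) (Fin n) ℝ)
    {φ : (Fin n → ℝ) → (Fin m → ℝ)} (hφ : ContDiff ℝ r φ) :
    ContDiff ℝ r (fun x => A *ᵥ x + φ x) :=
  A.mulVecLin.toContinuousLinearMap.contDiff.add hφ

theorem jacobianM_mulVec_add (A : Matrix (Fin m) (Fin n) ℝ) {φ : (Fin n → ℝ) → (Fin m → ℝ)}
    {x : Fin n → ℝ} (hφ : DifferentiableAt ℝ φ x) :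
    jacobianM m n (fun y => A *ᵥ y + φ y) x = A + jacobianM m n φ x := by
  have hA : HasFDerivAt (fun y => A *ᵥ y) (LinearMap.toContinuousLinearMap (Matrix.toLin' A)) x :=
    (LinearMap.toContinuousLinearMap (Matrix.toLin' A)).hasFDerivAt
  rw [jacobianM_eq_toMatrix', (hA.fun_add hφ.hasFDerivAt).fderiv,
    ContinuousLinearMap.toLinearMap_add, map_add, LinearMap.coe_toContinuousLinearMap,
    LinearMap.toMatrix'_toLin']
  rfl

theorem jacobianM_apply_of_differentiableAt {φ : (Fin n → ℝ) → (Fin m → ℝ)} {x : Fin n → ℝ}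
    (hφ : DifferentiableAt ℝ φ x) (i : Fin m) (j : Fin n) :
    jacobianM m n φ x i j = fderiv ℝ (fun y => φ y i) x (Pi.single j 1) := by
  have h := ((ContinuousLinearMap.proj (R := ℝ) (φ := fun _ : Fin m => ℝ) i).hasFDerivAt.comp x
    hφ.hasFDerivAt).fderiv
  exact (congrArg (· (Pi.single j 1)) h).symm

theorem jacobianM_eq_zero_of_notMem_tsupport {φ : (Fin n → ℝ) → (Fin m → ℝ)} {x : Fin n → ℝ}
    (hx : x ∉ tsupport φ) : jacobianM m n φ x = 0 := by
  ext i j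
  simp [jacobianM, fderiv_of_notMem_tsupport ℝ hx]

theorem mem_of_forall_add_jacobianM_mem {U : Set (Matrix (Fin m) (Fin n) ℝ)}
    {A : Matrix (Fin m) (Fin n) ℝ} {φ : (Fin n → ℝ) → (Fin m → ℝ)} (hφ : HasCompactSupport φ)
    (hA : ∀ x, A + jacobianM m n φ x ∈ U) : A ∈ U := by
  rcases isEmpty_or_nonempty (Fin n) with _ | _
  · simpa [Subsingleton.elim (jacobianM m n φ 0) 0] using hA 0
  · obtain ⟨x, hx⟩ := Set.ne_univ_iff_exists_notMem _ |>.1 hφ.isCompact.ne_univ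
    simpa [jacobianM_eq_zero_of_notMem_tsupport hx] using hA x

end Jacobian

section IntegralFDeriv

variable {E F : Type*} [NormedAddCommGroup E] [NormedSpace ℝ E] [MeasurableSpace E]
  [NormedAddCommGroup F] [NormedSpace ℝ F] {f : E → F}

theorem HasCompactSupport.integrable_fderiv_apply [OpensMeasurableSpace E] {μ : Measure E}
    [IsFiniteMeasureOnCompacts μ] (hcs : HasCompactSupport f) (hf : ContDiff ℝ 1 f) (v : E) :
    Integrable (fun x => fderiv ℝ f x v) μ :=
  ((hf.continuous_fderiv one_ne_zero).clm_apply continuous_const).integrable_of_hasCompactSupport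
    (hcs.fderiv_apply ℝ v)

theorem integral_fderiv_apply_eq_zero [FiniteDimensional ℝ E] [BorelSpace E] {μ : Measure E}
    [μ.IsAddHaarMeasure] (hf : ContDiff ℝ 1 f) (hcs : HasCompactSupport f) (v : E) :
    ∫ x, fderiv ℝ f x v ∂μ = 0 := by
  have hf' := hcs.integrable_fderiv_apply (μ := μ) hf v
  have h := integral_smul_fderiv_eq_neg_fderiv_smul_of_integrable (μ := μ)
    (f := fun _ => (1 : ℝ)) (g := f) (v := v) (by simp) (by simpa using hf')
    (by simpa using hf.continuous.integrable_of_hasCompactSupport hcs)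
    (fun _ _ => differentiableAt_const _) (fun x _ => hf.differentiable one_ne_zero x)
  simpa using h

end IntegralFDeriv

theorem exists_homeomorph_eq_contDiff_symm {E : Type*} [NormedAddCommGroup E] [NormedSpace ℝ E]
    [FiniteDimensional ℝ E] {f : E → E} {n : WithTop ℕ∞} (hf : ContDiff ℝ n f) (hn : 1 ≤ n)
    (hdet : ∀ x, (fderiv ℝ f x).det ≠ 0) (hbij : Function.Bijective f) :
    ∃ e : E ≃ₜ E, ⇑e = f ∧ ContDiff ℝ n e.symm := by
  let f' : E → E ≃L[ℝ] E := fun x => (fderiv ℝ f x).toContinuousLinearEquivOfDetNeZero (hdet x)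
  have hn0 : n ≠ 0 := ENat.one_le_iff_ne_zero_withTop.1 hn
  have hf' : ∀ x, HasFDerivAt f (f' x : E →L[ℝ] E) x := fun x => by
    simpa [f', ContinuousLinearMap.coe_toContinuousLinearEquivOfDetNeZero] using
      (hf.differentiable hn0 x).hasFDerivAt
  have hopen : IsOpenMap f := isOpenMap_of_hasStrictFDerivAt_equiv fun x =>
    hf.contDiffAt.hasStrictFDerivAt' (hf' x) hn0
  let e := (Equiv.ofBijective f hbij).toHomeomorphOfContinuousOpen hf.continuous hopen
  exact ⟨e, rfl, e.contDiff_symm hf' hf⟩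

theorem bijective_of_hasDerivAt_pos_of_abs_sub_mul_le {f f' : ℝ → ℝ} {c C : ℝ}
    (hf : ∀ t, HasDerivAt f (f' t) t) (hf' : ∀ t, 0 < f' t) (hc : 0 < c)
    (hC : ∀ t, |f t - c * t| ≤ C) : Function.Bijective f := by
  refine ⟨(strictMono_of_hasDerivAt_pos hf hf').injective, ?_⟩
  refine Continuous.surjective (continuous_iff_continuousAt.2 fun t => (hf t).continuousAt) ?_ ?_
  · refine Filter.tendsto_atTop_mono (fun t => ?_) (Filter.tendsto_atTop_add_const_right _ (-C)
      (Filter.tendsto_id.const_mul_atTop hc))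
    simp only [id]; linarith [(abs_le.1 (hC t)).1]
  · refine Filter.tendsto_atBot_mono (fun t => ?_) (Filter.tendsto_atBot_add_const_right _ C
      (Filter.tendsto_id.const_mul_atBot hc))
    simp only [id]; linarith [(abs_le.1 (hC t)).2]

def hodographMatrix (k : Fin 2) (X : Matrix (Fin 2) (Fin 2) ℝ) : Matrix (Fin 2) (Fin 2) ℝ :=
  Matrix.of ![Pi.single k 1, X k]

theorem det_hodographMatrix_zero (X : Matrix (Fin 2) (Fin 2) ℝ) :
    (hodographMatrix 0 X).det = X 0 1 := by
  simp [hodographMatrix, Matrix.det_fin_two]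

theorem Psi_mul_hodographMatrix_zero (X : Matrix (Fin 2) (Fin 2) ℝ) (hX : X 0 1 ≠ 0) :
    Psi X * hodographMatrix 0 X = hodographMatrix 1 X := by
  ext i j
  fin_cases i <;> fin_cases j <;>
    simp [Psi, hodographMatrix, Matrix.mul_apply, Fin.sum_univ_two, Matrix.det_fin_two, hX, field]

def hodograph (k : Fin 2) (u : (Fin 2 → ℝ) → (Fin 2 → ℝ)) (x : Fin 2 → ℝ) : Fin 2 → ℝ :=
  ![x k, u x k]

theorem hodograph_mulVec (k : Fin 2) (A : Matrix (Fin 2) (Fin 2) ℝ) (x : Fin 2 → ℝ) :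
    hodograph k (A *ᵥ ·) x = hodographMatrix k A *ᵥ x := by
  ext i
  fin_cases i <;> simp [hodograph, hodographMatrix, mulVec, dotProduct, Pi.single_apply]

section Hodograph

variable {u : (Fin 2 → ℝ) → (Fin 2 → ℝ)}

theorem contDiff_hodograph {n : WithTop ℕ∞} (k : Fin 2) (hu : ContDiff ℝ n u) :
    ContDiff ℝ n (hodograph k u) := by
  refine contDiff_pi.2 fun i => ?_
  fin_cases i
  · exact contDiff_apply ℝ ℝ k
  · exact contDiff_pi.1 hu k

theorem differentiableAt_hodograph {x : Fin 2 → ℝ} (k : Fin 2) (hu : DifferentiableAt ℝ u x) :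
    DifferentiableAt ℝ (hodograph k u) x := by
  refine differentiableAt_pi.2 fun i => ?_
  fin_cases i
  · exact differentiableAt_apply k x
  · exact differentiableAt_pi.1 hu k

theorem jacobianM_hodograph {x : Fin 2 → ℝ} (k : Fin 2) (hu : DifferentiableAt ℝ u x) :
    jacobianM 2 2 (hodograph k u) x = hodographMatrix k (jacobianM 2 2 u x) := by
  ext i j
  rw [jacobianM_apply_of_differentiableAt (differentiableAt_hodograph k hu)]
  fin_cases i
  · simp [hodograph, hodographMatrix, (hasFDerivAt_apply k x).fderiv, Pi.single_apply, eq_comm]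
  · simp [hodograph, hodographMatrix, jacobianM_apply_of_differentiableAt hu]

theorem hodograph_zero_bijective (hu : ∀ a, Function.Bijective fun t => u ![a, t] 0) :
    Function.Bijective (hodograph 0 u) := by
  have hvec : ∀ x : Fin 2 → ℝ, ![x 0, x 1] = x := fun x => by
    ext i; fin_cases i <;> rfl
  refine ⟨fun x y hxy => ?_, fun y => ?_⟩
  · have h0 : x 0 = y 0 := congrFun hxy 0
    have h1 : u ![y 0, x 1] 0 = u ![y 0, y 1] 0 := by
      rw [hvec y, ← h0, hvec x]; exact congrFun hxy 1
    rw [← hvec x, ← hvec y, h0, (hu (y 0)).injective h1]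
  · obtain ⟨t, ht⟩ := (hu (y 0)).surjective (y 1)
    refine ⟨![y 0, t], ?_⟩
    ext i; fin_cases i
    · rfl
    · exact ht

theorem hasDerivAt_hodograph_slice {a t : ℝ} (hu : DifferentiableAt ℝ u ![a, t]) :
    HasDerivAt (fun t => u ![a, t] 0) (jacobianM 2 2 u ![a, t] 0 1) t := by
  have hcurve : HasDerivAt (fun t : ℝ => ![a, t]) (Pi.single 1 1) t := by
    refine hasDerivAt_pi.2 fun i => ?_
    fin_cases i
    · simpa using hasDerivAt_const t a
    · simpa using hasDerivAt_id' t
  rw [jacobianM_apply_of_differentiableAt hu]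
  exact (differentiableAt_pi.1 hu 0).hasFDerivAt.comp_hasDerivAt t hcurve

theorem det_fderiv_hodograph_zero {x : Fin 2 → ℝ} (hu : DifferentiableAt ℝ u x) :
    (fderiv ℝ (hodograph 0 u) x).det = jacobianM 2 2 u x 0 1 := by
  rw [ContinuousLinearMap.det, ← LinearMap.det_toMatrix', ← jacobianM_eq_toMatrix',
    jacobianM_hodograph 0 hu, det_hodographMatrix_zero]

theorem jacobianM_hodograph_one_comp_symm (e : (Fin 2 → ℝ) ≃ₜ (Fin 2 → ℝ))
    (he : ⇑e = hodograph 0 u) (hu : Differentiable ℝ u) (he_symm : Differentiable ℝ e.symm)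
    (hdet : ∀ x, jacobianM 2 2 u x 0 1 ≠ 0) (x : Fin 2 → ℝ) :
    jacobianM 2 2 (hodograph 1 u ∘ e.symm) (e x) = Psi (jacobianM 2 2 u x) := by
  have hv : DifferentiableAt ℝ (hodograph 1 u ∘ e.symm) (e x) :=
    (differentiableAt_hodograph 1 (hu _)).comp _ (he_symm _)
  have he_x : DifferentiableAt ℝ e x := he ▸ differentiableAt_hodograph 0 (hu x)
  have hunit : IsUnit (hodographMatrix 0 (jacobianM 2 2 u x)) := by
    simpa [Matrix.isUnit_iff_isUnit_det, det_hodographMatrix_zero] using hdet x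
  have hchain := jacobianM_comp hv he_x
  rw [Function.comp_assoc, e.symm_comp_self, Function.comp_id, he,
    jacobianM_hodograph 1 (hu x), jacobianM_hodograph 0 (hu x),
    ← Psi_mul_hodographMatrix_zero _ (hdet x)] at hchain
  rw [he]
  exact (hunit.mul_left_inj.1 hchain).symm

theorem setIntegral_image_hodograph_zero (hu : Differentiable ℝ u)
    (hinj : Function.Injective (hodograph 0 u)) (hpos : ∀ x, 0 < jacobianM 2 2 u x 0 1)
    {s : Set (Fin 2 → ℝ)} (hs : MeasurableSet s) (g : (Fin 2 → ℝ) → ℝ) :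
    ∫ y in hodograph 0 u '' s, g y = ∫ x in s, jacobianM 2 2 u x 0 1 * g (hodograph 0 u x) := by
  have hΦ : ∀ x, HasFDerivAt (hodograph 0 u) (fderiv ℝ (hodograph 0 u) x) x := fun x =>
    (differentiableAt_hodograph 0 (hu x)).hasFDerivAt
  rw [integral_image_eq_integral_abs_det_fderiv_smul volume hs
    (fun x _ => (hΦ x).hasFDerivWithinAt) hinj.injOn]
  refine setIntegral_congr_fun hs fun x _ => ?_
  rw [det_fderiv_hodograph_zero (hu x), abs_of_pos (hpos x), smul_eq_mul]

end Hodograph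

theorem Psi_mem_Mplus {X : Matrix (Fin 2) (Fin 2) ℝ} (hX : X ∈ Mplus) : Psi X ∈ Mplus := by
  simpa [Mplus, Psi] using hX

def dualTestFn (A : Matrix (Fin 2) (Fin 2) ℝ) (φ : (Fin 2 → ℝ) → (Fin 2 → ℝ))
    (e : (Fin 2 → ℝ) ≃ₜ (Fin 2 → ℝ)) : (Fin 2 → ℝ) → (Fin 2 → ℝ) :=
  fun y => (-Psi A) *ᵥ y + (hodograph 1 (fun x => A *ᵥ x + φ x) ∘ e.symm) y

section DualTestFn

variable {A : Matrix (Fin 2) (Fin 2) ℝ} {φ : (Fin 2 → ℝ) → (Fin 2 → ℝ)}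
  {e : (Fin 2 → ℝ) ≃ₜ (Fin 2 → ℝ)}

theorem hodograph_zero_mulVec_add_bijective (hφ : ContDiff ℝ 1 φ) (hφcs : HasCompactSupport φ)
    (hpos : ∀ x, 0 < (A + jacobianM 2 2 φ x) 0 1) :
    Function.Bijective (hodograph 0 fun x => A *ᵥ x + φ x) := by
  have hA : 0 < A 0 1 := mem_of_forall_add_jacobianM_mem (U := {X | 0 < X 0 1}) hφcs hpos
  have hu := (contDiff_mulVec_add A hφ).differentiable one_ne_zero
  obtain ⟨C, hC⟩ := hφcs.exists_bound_of_continuous hφ.continuous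
  refine hodograph_zero_bijective fun a => bijective_of_hasDerivAt_pos_of_abs_sub_mul_le
    (fun t => hasDerivAt_hodograph_slice (hu _)) (fun t => ?_) hA (C := |A 0 0 * a| + C)
    fun t => ?_
  · rw [jacobianM_mulVec_add A (hφ.differentiable one_ne_zero _)]
    exact hpos _
  · have h : (A *ᵥ ![a, t] + φ ![a, t]) 0 - A 0 1 * t = A 0 0 * a + φ ![a, t] 0 := by
      simp only [mulVec_fin_two, cons_val_zero, cons_val_one, cons_val_fin_one, Pi.add_apply]
      ring
    rw [h]
    exact (abs_add_le _ _).trans (add_le_add_right ((norm_le_pi_norm _ 0).trans (hC _)) _)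

theorem exists_homeomorph_hodograph_zero {n : WithTop ℕ∞} (hφ : ContDiff ℝ n φ) (hn : 1 ≤ n)
    (hφcs : HasCompactSupport φ) (hpos : ∀ x, 0 < (A + jacobianM 2 2 φ x) 0 1) :
    ∃ e : (Fin 2 → ℝ) ≃ₜ (Fin 2 → ℝ),
      ⇑e = hodograph 0 (fun x => A *ᵥ x + φ x) ∧ ContDiff ℝ n e.symm := by
  have hφ1 := hφ.of_le hn
  have hu := (contDiff_mulVec_add A hφ1).differentiable one_ne_zero
  refine exists_homeomorph_eq_contDiff_symm (contDiff_hodograph 0 (contDiff_mulVec_add A hφ)) hn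
    (fun x => ?_) (hodograph_zero_mulVec_add_bijective hφ1 hφcs hpos)
  rw [det_fderiv_hodograph_zero (hu x), jacobianM_mulVec_add A (hφ1.differentiable one_ne_zero x)]
  exact (hpos x).ne'

theorem contDiff_dualTestFn {n : WithTop ℕ∞} (hφ : ContDiff ℝ n φ) (he : ContDiff ℝ n e.symm) :
    ContDiff ℝ n (dualTestFn A φ e) :=
  contDiff_mulVec_add _ ((contDiff_hodograph 1 (contDiff_mulVec_add A hφ)).comp he)

theorem dualTestFn_apply_eq_zero (he : ⇑e = hodograph 0 (fun x => A *ᵥ x + φ x))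
    (hA : A 0 1 ≠ 0) {x : Fin 2 → ℝ} (hx : φ x = 0) : dualTestFn A φ e (e x) = 0 := by
  have hlin : ∀ k, hodograph k (fun y => A *ᵥ y + φ y) x = hodographMatrix k A *ᵥ x := fun k => by
    rw [← hodograph_mulVec]
    simp only [hodograph, hx, add_zero]
  rw [dualTestFn, Function.comp_apply, e.symm_apply_apply, he, hlin, hlin, neg_mulVec,
    mulVec_mulVec, Psi_mul_hodographMatrix_zero A hA, neg_add_cancel]

theorem tsupport_dualTestFn_subset (he : ⇑e = hodograph 0 (fun x => A *ᵥ x + φ x))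
    (hA : A 0 1 ≠ 0) : tsupport (dualTestFn A φ e) ⊆ e '' tsupport φ := by
  have hsupp : Function.support (dualTestFn A φ e) ⊆ e '' Function.support φ := fun y hy =>
    ⟨e.symm y, fun hφy => hy (by simpa using dualTestFn_apply_eq_zero he hA hφy),
      e.apply_symm_apply y⟩
  rw [tsupport, tsupport, e.image_closure]
  exact closure_mono hsupp

theorem hasCompactSupport_dualTestFn (he : ⇑e = hodograph 0 (fun x => A *ᵥ x + φ x))
    (hA : A 0 1 ≠ 0) (hφcs : HasCompactSupport φ) : HasCompactSupport (dualTestFn A φ e) :=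
  (hφcs.image e.continuous).of_isClosed_subset (isClosed_tsupport _)
    (tsupport_dualTestFn_subset he hA)

theorem Psi_add_jacobianM_dualTestFn {n : WithTop ℕ∞} (hφ : ContDiff ℝ n φ) (hn : 1 ≤ n)
    (he : ⇑e = hodograph 0 (fun x => A *ᵥ x + φ x)) (he_symm : ContDiff ℝ n e.symm)
    (hpos : ∀ x, 0 < (A + jacobianM 2 2 φ x) 0 1) (x : Fin 2 → ℝ) :
    Psi A + jacobianM 2 2 (dualTestFn A φ e) (e x) = Psi (A + jacobianM 2 2 φ x) := by
  have hn0 : n ≠ 0 := ENat.one_le_iff_ne_zero_withTop.1 hn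
  have hu := (contDiff_mulVec_add A hφ).differentiable hn0
  have hJu : ∀ x, jacobianM 2 2 (fun x => A *ᵥ x + φ x) x = A + jacobianM 2 2 φ x := fun x =>
    jacobianM_mulVec_add A (hφ.differentiable hn0 x)
  have hv := ((contDiff_hodograph 1 (contDiff_mulVec_add A hφ)).comp he_symm).differentiable hn0
  unfold dualTestFn
  rw [jacobianM_mulVec_add _ (hv _), jacobianM_hodograph_one_comp_symm e he hu
    (he_symm.differentiable hn0) (fun x => by rw [hJu]; exact (hpos x).ne') x, hJu]
  abel

theorem setIntegral_image_eq_setIntegral_jacobianM_mul (hφ : ContDiff ℝ 1 φ)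
    (he : ⇑e = hodograph 0 (fun x => A *ᵥ x + φ x)) (hpos : ∀ x, 0 < (A + jacobianM 2 2 φ x) 0 1)
    {s : Set (Fin 2 → ℝ)} (hs : MeasurableSet s) (g : (Fin 2 → ℝ) → ℝ) :
    ∫ y in e '' s, g y = ∫ x in s, (A + jacobianM 2 2 φ x) 0 1 * g (e x) := by
  have hJu : ∀ x, jacobianM 2 2 (fun x => A *ᵥ x + φ x) x = A + jacobianM 2 2 φ x := fun x =>
    jacobianM_mulVec_add A (hφ.differentiable one_ne_zero x)
  simpa only [he, hJu] using setIntegral_image_hodograph_zero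
    ((contDiff_mulVec_add A hφ).differentiable one_ne_zero) (he ▸ e.injective)
    (fun x => hJu x ▸ hpos x) hs g

theorem setIntegral_add_jacobianM_apply {m n : ℕ} {A : Matrix (Fin m) (Fin n) ℝ}
    {φ : (Fin n → ℝ) → (Fin m → ℝ)} (hφ : ContDiff ℝ 1 φ) (hφcs : HasCompactSupport φ)
    {s : Set (Fin n → ℝ)} (hs : tsupport φ ⊆ s) (hvol : volume s ≠ ⊤) (i : Fin m) (j : Fin n) :
    ∫ x in s, (A + jacobianM m n φ x) i j = A i j * (volume s).toReal := by
  have hφi : ContDiff ℝ 1 (fun x => φ x i) := contDiff_pi.1 hφ i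
  have hφics : HasCompactSupport (fun x => φ x i) :=
    hφcs.comp_left (g := fun v : Fin m → ℝ => v i) rfl
  have hJ : (fun x => jacobianM m n φ x i j) =
      fun x => fderiv ℝ (fun y => φ y i) x (Pi.single j 1) :=
    funext fun x => jacobianM_apply_of_differentiableAt (hφ.differentiable one_ne_zero x) i j
  have hJ_out : ∀ x ∉ s, jacobianM m n φ x i j = 0 := fun x hx => by
    rw [jacobianM_eq_zero_of_notMem_tsupport fun h => hx (hs h), Matrix.zero_apply]
  simp only [Matrix.add_apply]
  rw [integral_add (integrableOn_const hvol).integrable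
      (hJ ▸ hφics.integrable_fderiv_apply hφi _).integrableOn.integrable,
    setIntegral_eq_integral_of_forall_compl_eq_zero hJ_out, hJ,
    integral_fderiv_apply_eq_zero hφi hφics, setIntegral_const, smul_eq_mul, mul_comm, add_zero,
    measureReal_def]

end DualTestFn

/-- If `h` is quasiconvex on `M^{2×2}_+` then its dual `h̃(X) = X₁₂ · h(Ψ(X))` is
quasiconvex on `M^{2×2}_+`. -/
theorem dualFn_quasiconvexOn (h : Matrix (Fin 2) (Fin 2) ℝ → ℝ)
    (hh : IsQuasiconvexOn Mplus h) :
    IsQuasiconvexOn Mplus (dualFn h) := by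
  intro Ω hΩo hΩne hΩb A φ hφ hφcs hφΩ hmem
  have hn : (1 : WithTop ℕ∞) ≤ (⊤ : ℕ∞) := by exact_mod_cast le_top
  have hφ1 := hφ.of_le hn
  have hA : A 0 1 ≠ 0 := (mem_of_forall_add_jacobianM_mem hφcs hmem).ne'
  obtain ⟨e, he, he_symm⟩ := exists_homeomorph_hodograph_zero hφ hn hφcs hmem
  have hcov := setIntegral_image_eq_setIntegral_jacobianM_mul hφ1 he hmem hΩo.measurableSet
  have hJ := Psi_add_jacobianM_dualTestFn hφ hn he he_symm hmem
  have hΩ'b : Bornology.IsBounded (e '' Ω) :=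
    (hΩb.isCompact_closure.image e.continuous).isBounded.subset (Set.image_mono subset_closure)
  have hjensen := hh (e '' Ω) (e.isOpenMap Ω hΩo) (hΩne.image e) hΩ'b (Psi A) (dualTestFn A φ e)
    (contDiff_dualTestFn hφ he_symm) (hasCompactSupport_dualTestFn he hA hφcs)
    ((tsupport_dualTestFn_subset he hA).trans (Set.image_mono hφΩ))
    (fun y => e.apply_symm_apply y ▸ hJ (e.symm y) ▸ Psi_mem_Mplus (hmem _))
  calc dualFn h A * (volume Ω).toReal
      = h (Psi A) * ∫ x in Ω, (A + jacobianM 2 2 φ x) 0 1 := by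
        rw [setIntegral_add_jacobianM_apply hφ1 hφcs hφΩ hΩb.measure_lt_top.ne, dualFn]; ring
    _ = h (Psi A) * (volume (e '' Ω)).toReal := by
        rw [← measureReal_def]; simpa using congrArg (h (Psi A) * ·) (hcov 1).symm
    _ ≤ ∫ y in e '' Ω, h (Psi A + jacobianM 2 2 (dualTestFn A φ e) y) := hjensen
    _ = ∫ x in Ω, dualFn h (A + jacobianM 2 2 φ x) := by simp only [hcov, hJ, dualFn]

end
end
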